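/- arXiv:2302.09589 — 6 statements merged into one kernel-verified Lean document; each statement's English description precedes it below -/
import Mathlib

section
/- In the infinite dihedral group, every element is a generalized torsion element. -/
/-- `x` is a generalized torsion element: some nonempty finite product of
conjugates of `x` equals `1`. -/
def IsGenTorsion {G : Type*} [Group G] (x : G) : Prop :=
  ∃ l : List G, l ≠ [] ∧ (l.map fun g => g⁻¹ * x * g).prod = 1

/-- The generalized order of `x`: the least `k ≥ 1` such that some product of
`k` conjugates of `x` equals `1` (0 if no such `k` exists). -/
noncomputable def genOrder {G : Type*} [Group G] (x : G) : ℕ :=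
  sInf {k | 0 < k ∧ ∃ l : List G, l.length = k ∧ (l.map fun g => g⁻¹ * x * g).prod = 1}

/-! Every element of a dihedral group is conjugate to its inverse: reflections are involutions,
and a reflection inverts every rotation. If `g⁻¹ * x * g = x⁻¹`, then the product of the two
conjugates `x` and `g⁻¹ * x * g` is `1`. -/

theorem IsGenTorsion.of_conj_eq_inv {G : Type*} [Group G] {x : G} (g : G)
    (h : g⁻¹ * x * g = x⁻¹) : IsGenTorsion x :=
  ⟨[1, g], List.cons_ne_nil _ _, by simp [h]⟩

namespace DihedralGroup

theorem exists_conj_eq_inv {n : ℕ} (x : DihedralGroup n) : ∃ g, g⁻¹ * x * g = x⁻¹ := by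
  cases x with
  | r i => exact ⟨sr 0, by simp only [inv_sr, sr_mul_r, sr_mul_sr, inv_r]; ring_nf⟩
  | sr i => exact ⟨1, by simp only [inv_one, one_mul, mul_one, inv_sr]⟩

end DihedralGroup

theorem stmt1 (x : DihedralGroup 0) : IsGenTorsion x :=
  let ⟨g, hg⟩ := x.exists_conj_eq_inv
  .of_conj_eq_inv g hg
end

section
/- If G is an FC-group (every conjugacy class of G is finite), then every generalized torsion element of G is a torsion element. -/
open Subgroup
open scoped commutatorElement

section FCGroup

variable {G : Type*} [Group G]

lemma Subgroup.finiteIndex_centralizer_of_finite_isConj {g : G}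
    (hg : {h : G | IsConj g h}.Finite) : (centralizer {g}).FiniteIndex := by
  have : Finite (MulAction.orbit (ConjAct G) g) := by
    refine (hg.subset fun h hh => ?_).to_subtype
    exact isConj_comm.mp (ConjAct.mem_orbit_conjAct.mp hh)
  have : Finite (G ⧸ centralizer {g}) := Finite.of_equiv _
    ((MulAction.orbitEquivQuotientStabilizer (ConjAct G) g).trans
      (quotientEquivOfEq (ConjAct.stabilizer_eq_centralizer g)))
  exact finiteIndex_of_finite_quotient

lemma Subgroup.finiteIndex_center_of_fg_of_finite_isConj [Group.FG G]
    (hFC : ∀ g : G, {h : G | IsConj g h}.Finite) : (center G).FiniteIndex := by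
  obtain ⟨S, hS, hSfin⟩ := Group.fg_iff.mp ‹Group.FG G›
  have := hSfin.to_subtype
  rw [center_eq_infi' hS]
  exact finiteIndex_iInf fun g => finiteIndex_centralizer_of_finite_isConj (hFC g)

lemma commutatorElement_mul_mem_center {a b z w : G} (hz : z ∈ center G) (hw : w ∈ center G) :
    ⁅a * z, b * w⁆ = ⁅a, b⁆ := by
  rw [mem_center_iff] at hz hw
  simp only [commutatorElement_def, mul_inv_rev]
  calc a * z * (b * w) * (z⁻¹ * a⁻¹) * (w⁻¹ * b⁻¹)
      = a * (z * (b * w)) * z⁻¹ * a⁻¹ * w⁻¹ * b⁻¹ := by group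
    _ = a * b * (w * a⁻¹) * w⁻¹ * b⁻¹ := by rw [← hz]; group
    _ = a * b * a⁻¹ * b⁻¹ := by rw [← hw]; group

lemma finite_commutatorSet_of_finiteIndex_center [(center G).FiniteIndex] :
    Finite (commutatorSet G) := by
  refine (Set.Finite.subset (Set.finite_range
    fun p : (G ⧸ center G) × (G ⧸ center G) => ⁅p.1.out, p.2.out⁆) ?_).to_subtype
  rintro _ ⟨a, b, rfl⟩
  obtain ⟨z, hz⟩ := QuotientGroup.mk_out_eq_mul (center G) a
  obtain ⟨w, hw⟩ := QuotientGroup.mk_out_eq_mul (center G) b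
  exact ⟨((a : G ⧸ center G), (b : G ⧸ center G)), by
    simp only [hz, hw, commutatorElement_mul_mem_center z.2 w.2]⟩

lemma IsGenTorsion.exists_pow_mem_commutator {x : G} (hx : IsGenTorsion x) :
    ∃ k ≠ 0, x ^ k ∈ commutator G := by
  obtain ⟨l, hl, hprod⟩ := hx
  refine ⟨l.length, by simpa using hl, ?_⟩
  rw [← Abelianization.ker_of, MonoidHom.mem_ker]
  have hconj (g : G) : Abelianization.of (g⁻¹ * x * g) = Abelianization.of x := by
    rw [map_mul, map_mul, mul_comm, ← mul_assoc, ← map_mul, mul_inv_cancel, map_one, one_mul]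
  have := congrArg Abelianization.of hprod
  rw [map_list_prod, List.map_map, map_one] at this
  simpa [Function.comp_def, hconj, List.prod_replicate] using this

lemma IsGenTorsion.isOfFinOrder_of_fg [Group.FG G]
    (hFC : ∀ g : G, {h : G | IsConj g h}.Finite) {x : G} (hx : IsGenTorsion x) :
    IsOfFinOrder x := by
  have := finiteIndex_center_of_fg_of_finite_isConj hFC
  have := finite_commutatorSet_of_finiteIndex_center (G := G)
  obtain ⟨k, hk, hxk⟩ := hx.exists_pow_mem_commutator
  exact (Submonoid.isOfFinOrder_coe.mpr (isOfFinOrder_of_finite (⟨x ^ k, hxk⟩ : commutator G))).of_pow hk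

lemma Subgroup.finite_isConj (K : Subgroup G) (hFC : ∀ g : G, {h : G | IsConj g h}.Finite)
    (g : K) : {h : K | IsConj g h}.Finite :=
  ((hFC g).preimage Subtype.val_injective.injOn).subset fun _ hh => K.subtype.map_isConj hh

lemma IsGenTorsion.of_subgroup {K : Subgroup G} {x : G} (hx : x ∈ K) {l : List G}
    (hl : l ≠ []) (hlK : ∀ g ∈ l, g ∈ K) (hprod : (l.map fun g => g⁻¹ * x * g).prod = 1) :
    IsGenTorsion (⟨x, hx⟩ : K) := by
  refine ⟨l.pmap Subtype.mk hlK, by simpa using hl, K.subtype_injective ?_⟩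
  simpa [map_list_prod, List.map_pmap, List.pmap_eq_map] using hprod

end FCGroup

theorem stmt9 {G : Type*} [Group G] (hFC : ∀ g : G, {h : G | IsConj g h}.Finite)
    (x : G) (hx : IsGenTorsion x) : IsOfFinOrder x := by
  obtain ⟨l, hl, hprod⟩ := hx
  set K := closure (insert x {g | g ∈ l} : Set G)
  have : Finite (insert x {g | g ∈ l} : Set G) := (l.finite_toSet.insert x).to_subtype
  have : Group.FG K := Group.closure_finite_fg _
  have hxK : x ∈ K := subset_closure (Set.mem_insert x _)
  have hlK : ∀ g ∈ l, g ∈ K := fun g hg => subset_closure (Set.mem_insert_of_mem x hg)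
  exact Submonoid.isOfFinOrder_coe.mpr
    ((IsGenTorsion.of_subgroup hxK hl hlK hprod).isOfFinOrder_of_fg (K.finite_isConj hFC))
end

section
/- Let G be a finite group and g in G. Then the generalized order of g is at most the number of conjugacy classes of G that contain some power of g. -/
section Aux

variable {G : Type*} [Group G]

/-- Some nonempty product of at most `k` conjugates of `g` is conjugate to `g ^ e`. -/
private def Qaux (g : G) (e k : ℕ) : Prop :=
  ∃ l : List G, l ≠ [] ∧ l.length ≤ k ∧ ∃ h : G,
    (l.map fun a => a⁻¹ * g * a).prod = h⁻¹ * g ^ e * h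

private lemma Qaux_one (g : G) : Qaux g 1 1 :=
  ⟨[1], by simp, by simp, 1, by simp⟩

private lemma Qaux_mono (g : G) {e k k' : ℕ} (hk : k ≤ k') (h : Qaux g e k) : Qaux g e k' := by
  obtain ⟨l, h1, h2, h3⟩ := h
  exact ⟨l, h1, h2.trans hk, h3⟩

private lemma Qaux_conj (g : G) {e e' k : ℕ}
    (hc : ConjClasses.mk (g ^ e) = ConjClasses.mk (g ^ e')) (h : Qaux g e k) : Qaux g e' k := by
  obtain ⟨l, h1, h2, h3, h4⟩ := h
  rw [ConjClasses.mk_eq_mk_iff_isConj, isConj_iff] at hc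
  obtain ⟨c, hc⟩ := hc
  refine ⟨l, h1, h2, c * h3, ?_⟩
  rw [h4, ← hc]
  group

private lemma Qaux_succ (g : G) {e k : ℕ} (h : Qaux g e k) : Qaux g (e + 1) (k + 1) := by
  obtain ⟨l, h1, h2, h3, h4⟩ := h
  refine ⟨l ++ [h3], by simp, by simpa using h2, h3, ?_⟩
  simp only [List.map_append, List.prod_append, h4, List.map_cons, List.map_nil,
    List.prod_cons, List.prod_nil, pow_succ]
  group

/-- The conjugacy classes of `g^1, …, g^m`. -/
private def Taux [DecidableEq (ConjClasses G)] (g : G) (m : ℕ) : Finset (ConjClasses G) :=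
  (Finset.range m).image fun d => ConjClasses.mk (g ^ (d + 1))

private lemma Qaux_main [DecidableEq (ConjClasses G)] (g : G) : ∀ e : ℕ, Qaux g (e + 1) ((Taux g (e + 1)).card) := by
  intro e
  induction e using Nat.strong_induction_on with
  | _ e ih =>
    by_cases hmem : ConjClasses.mk (g ^ (e + 1)) ∈ Taux g e
    · simp only [Taux, Finset.mem_image, Finset.mem_range] at hmem
      obtain ⟨d, hd, hcd⟩ := hmem
      have h2 := Qaux_conj g hcd (ih d hd)
      refine Qaux_mono g (Finset.card_le_card ?_) h2
      exact Finset.image_subset_image (Finset.range_subset_range.mpr (by omega))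
    · have hins : Taux g (e + 1) = insert (ConjClasses.mk (g ^ (e + 1))) (Taux g e) := by
        simp [Taux, Finset.range_add_one]
      have hcard : (Taux g (e + 1)).card = (Taux g e).card + 1 := by
        rw [hins, Finset.card_insert_of_notMem hmem]
      rw [hcard]
      cases e with
      | zero => simpa [Taux] using Qaux_one g
      | succ e' => exact Qaux_succ g (ih e' (Nat.lt_succ_self e'))

end Aux

theorem stmt11 {G : Type*} [Group G] [Fintype G] (g : G) :
    genOrder g ≤ Nat.card {C : ConjClasses G | ∃ n : ℕ, ConjClasses.mk (g ^ n) = C} := by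
  classical
  have hN : 0 < orderOf g := orderOf_pos g
  obtain ⟨N, hN'⟩ : ∃ N, orderOf g = N + 1 := ⟨orderOf g - 1, by omega⟩
  obtain ⟨l, hne, hlen, h, hprod⟩ := Qaux_main g N
  have hg : g ^ (N + 1) = 1 := by rw [← hN']; exact pow_orderOf_eq_one g
  have hprod1 : (l.map fun a => a⁻¹ * g * a).prod = 1 := by
    rw [hprod, hg]; group
  have h1 : genOrder g ≤ l.length :=
    Nat.sInf_le ⟨List.length_pos_iff.mpr hne, l, rfl, hprod1⟩
  have h2 : (Taux g (N + 1)).card ≤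
      Nat.card {C : ConjClasses G | ∃ n : ℕ, ConjClasses.mk (g ^ n) = C} := by
    have hsub : ↑(Taux g (N + 1)) ⊆ {C : ConjClasses G | ∃ n : ℕ, ConjClasses.mk (g ^ n) = C} := by
      intro C hC
      simp only [Taux, Finset.coe_image, Set.mem_image, Finset.mem_coe, Finset.mem_range] at hC
      obtain ⟨d, _, rfl⟩ := hC
      exact ⟨d + 1, rfl⟩
    calc (Taux g (N + 1)).card
        = (↑(Taux g (N + 1)) : Set (ConjClasses G)).ncard := (Set.ncard_coe_finset _).symm
      _ ≤ {C : ConjClasses G | ∃ n : ℕ, ConjClasses.mk (g ^ n) = C}.ncard :=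
          Set.ncard_le_ncard hsub (Set.toFinite _)
      _ = Nat.card {C : ConjClasses G | ∃ n : ℕ, ConjClasses.mk (g ^ n) = C} :=
          (Nat.card_coe_set_eq _)
  exact h1.trans (hlen.trans h2)
end

section
/- Let G be a finite group with exactly 2μ non-real conjugacy classes (a conjugacy class C is real if C = C^{-1}). Then every element of G has generalized order at most 2μ + 2. -/
private lemma pc_conj {G : Type*} [Group G] (x c : G) (l : List G) :
    ((l.map fun g => g * c⁻¹).map fun g => g⁻¹ * x * g).prod
      = c * (l.map fun g => g⁻¹ * x * g).prod * c⁻¹ := by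
  induction l with
  | nil => simp
  | cons a t ih => simp only [List.map_cons, List.prod_cons, ih]; group

theorem stmt12 {G : Type*} [Group G] [Fintype G] (μ : ℕ)
    (hμ : Nat.card {C : ConjClasses G | ∃ g : G, ConjClasses.mk g = C ∧ ¬ IsConj g g⁻¹}
      = 2 * μ) (x : G) : genOrder x ≤ 2 * μ + 2 := by
  classical
  set K : Set ℕ :=
    {k | 0 < k ∧ ∃ l : List G, l.length = k ∧ (l.map fun g => g⁻¹ * x * g).prod = 1} with hKdef
  have hgen : genOrder x = sInf K := rfl
  have hKne : K.Nonempty := by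
    refine ⟨orderOf x, orderOf_pos x, List.replicate (orderOf x) 1, by simp, ?_⟩
    simp [pow_orderOf_eq_one x]
  have hmem := Nat.sInf_mem hKne
  rw [hgen]
  by_contra hcon
  push_neg at hcon
  obtain ⟨hmpos, l, hlen, hprod⟩ := hmem
  -- partial products
  set p : ℕ → G := fun k => ((l.take k).map fun g => g⁻¹ * x * g).prod with hp
  have htake_len : ∀ k : ℕ, k ≤ μ + 1 → (l.take k).length = k := by
    intro k hk
    rw [List.length_take, hlen]
    omega
  have hsplit : ∀ j : ℕ, p j * ((l.drop j).map fun g => g⁻¹ * x * g).prod = 1 := by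
    intro j
    have h := hprod
    conv at h => rw [← List.take_append_drop j l]
    rw [List.map_append, List.prod_append] at h
    exact h
  -- Case C: p i conjugate to (p j)⁻¹ gives a short relation
  have hC : ∀ i j : ℕ, 0 < i → i ≤ μ + 1 → 0 < j → j ≤ μ + 1 →
      IsConj (p i) (p j)⁻¹ → False := by
    intro i j hi hiμ hj hjμ hconj
    obtain ⟨c, hc⟩ := isConj_iff.mp hconj
    have hmemK : (j + i) ∈ K := by
      refine ⟨by omega, l.take j ++ (l.take i).map (· * c⁻¹), ?_, ?_⟩
      · rw [List.length_append, List.length_map, htake_len i hiμ, htake_len j hjμ]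
      · rw [List.map_append, List.prod_append, pc_conj, hc]
        simp [hp]
    have := Nat.sInf_le hmemK
    omega
  have hB : ∀ k : ℕ, 0 < k → k ≤ μ + 1 → ¬ IsConj (p k) (p k)⁻¹ :=
    fun k h1 h2 h3 => hC k k h1 h2 h1 h2 h3
  -- Case D: p i conjugate to p j (i < j) shortens the relation
  have hD : ∀ i j : ℕ, 0 < i → i < j → j ≤ μ + 1 → IsConj (p i) (p j) → False := by
    intro i j hi hij hjμ hconj
    obtain ⟨c, hc⟩ := isConj_iff.mp hconj
    have hmemK : (i + (sInf K - j)) ∈ K := by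
      refine ⟨by omega, (l.take i).map (· * c⁻¹) ++ l.drop j, ?_, ?_⟩
      · rw [List.length_append, List.length_map, List.length_drop,
          htake_len i (by omega), hlen]
      · rw [List.map_append, List.prod_append, pc_conj, hc]
        exact hsplit j
    have := Nat.sInf_le hmemK
    omega
  -- pigeonhole
  set N : Set (ConjClasses G) :=
    {C : ConjClasses G | ∃ g : G, ConjClasses.mk g = C ∧ ¬ IsConj g g⁻¹} with hNdef
  have hf : ∀ (a : Fin (μ + 1) × Bool),
      ConjClasses.mk (cond a.2 (p (a.1 + 1))⁻¹ (p (a.1 + 1))) ∈ N := by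
    rintro ⟨i, b⟩
    have hi1 : (0:ℕ) < i + 1 := Nat.succ_pos _
    have hi2 : (i:ℕ) + 1 ≤ μ + 1 := by omega
    cases b with
    | false => exact ⟨p (i + 1), rfl, hB _ hi1 hi2⟩
    | true =>
        refine ⟨(p (i + 1))⁻¹, rfl, fun h => hB _ hi1 hi2 ?_⟩
        rw [inv_inv] at h
        exact h.symm
  let f : Fin (μ + 1) × Bool → N := fun a => ⟨_, hf a⟩
  have hcard : Fintype.card N < Fintype.card (Fin (μ + 1) × Bool) := by
    have h1 : Fintype.card N = 2 * μ := by
      rw [← Nat.card_eq_fintype_card]; exact hμ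
    have h2 : Fintype.card (Fin (μ + 1) × Bool) = 2 * (μ + 1) := by
      simp [Fintype.card_prod, mul_comm]
    omega
  obtain ⟨a, b, hne, hfe⟩ := Fintype.exists_ne_map_eq_of_card_lt f hcard
  have hmk : ConjClasses.mk (cond a.2 (p (a.1 + 1))⁻¹ (p (a.1 + 1)))
      = ConjClasses.mk (cond b.2 (p (b.1 + 1))⁻¹ (p (b.1 + 1))) := by
    have := congrArg Subtype.val hfe
    exact this
  obtain ⟨i, bi⟩ := a
  obtain ⟨j, bj⟩ := b
  simp only at hmk
  have hi1 : (0:ℕ) < i + 1 := Nat.succ_pos _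
  have hi2 : (i:ℕ) + 1 ≤ μ + 1 := by omega
  have hj1 : (0:ℕ) < j + 1 := Nat.succ_pos _
  have hj2 : (j:ℕ) + 1 ≤ μ + 1 := by omega
  -- helper: from IsConj (p i') (p j') with i' ≠ j' derive False
  have hDD : ∀ i' j' : ℕ, 0 < i' → i' ≤ μ + 1 → 0 < j' → j' ≤ μ + 1 → i' ≠ j' →
      IsConj (p i') (p j') → False := by
    intro i' j' h1 h2 h3 h4 h5 h6
    rcases lt_or_gt_of_ne h5 with h | h
    · exact hD i' j' h1 h h4 h6
    · exact hD j' i' h3 h h2 h6.symm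
  cases bi <;> cases bj <;> simp only [Bool.cond_false, Bool.cond_true] at hmk
  · -- both false : mk p(i+1) = mk p(j+1)
    have hconj := ConjClasses.mk_eq_mk_iff_isConj.mp hmk
    have hij : (i:ℕ) + 1 ≠ (j:ℕ) + 1 := by
      intro h
      exact hne (by ext <;> simp [Fin.ext_iff]; omega)
    exact hDD _ _ hi1 hi2 hj1 hj2 hij hconj
  · -- bi false, bj true : mk p(i+1) = mk p(j+1)⁻¹
    have hconj := ConjClasses.mk_eq_mk_iff_isConj.mp hmk
    exact hC _ _ hi1 hi2 hj1 hj2 hconj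
  · -- bi true, bj false : mk p(i+1)⁻¹ = mk p(j+1)
    have hconj := (ConjClasses.mk_eq_mk_iff_isConj.mp hmk).symm
    exact hC _ _ hj1 hj2 hi1 hi2 hconj
  · -- both true : mk p(i+1)⁻¹ = mk p(j+1)⁻¹
    have hconj := ConjClasses.mk_eq_mk_iff_isConj.mp hmk
    have hconj' : IsConj (p (i + 1)) (p (j + 1)) := by
      obtain ⟨c, hc⟩ := isConj_iff.mp hconj
      refine isConj_iff.mpr ⟨c, ?_⟩
      have h2 : (c * (p (↑i + 1))⁻¹ * c⁻¹)⁻¹ = p (↑j + 1) := by rw [hc, inv_inv]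
      rw [← h2]
      simp [mul_inv_rev, mul_assoc]
    have hij : (i:ℕ) + 1 ≠ (j:ℕ) + 1 := by
      intro h
      exact hne (by ext <;> simp [Fin.ext_iff]; omega)
    exact hDD _ _ hi1 hi2 hj1 hj2 hij hconj'
end

section
/- If x is an element of a group G with generalized order k, then for every positive integer m, x^{k^m} belongs to γ_m(G), the m-th term of the lower central series of G. -/
/-!
Put `N₀ = ⟪x⟫` (normal closure) and `Nⱼ₊₁ = [Nⱼ, G]`. Modulo `[N₀, G]`
the element `x` is central, so a product of `k` conjugates of `x` is `x ^ k`; hence `x ^ k`, and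
with it the `k`-th power of every conjugate of `x`, lies in `[N₀, G]`. In general, if `Nⱼ` is
generated by elements whose `k`-th powers lie in `Nⱼ₊₁`, then, `Nⱼ / Nⱼ₊₁` being central, every
element of `Nⱼ` has its `k`-th power in `Nⱼ₊₁`. The generators `[y, g]` of `Nⱼ₊₁` are central
modulo `Nⱼ₊₂`, so `[y, g] ^ k ≡ [y ^ k, g]`, which lies in `Nⱼ₊₂` once `y ^ k ∈ Nⱼ₊₁`. By
induction `x ^ (k ^ j) ∈ Nⱼ ≤ γⱼ₊₁(G)`.
-/

open Subgroup

open scoped commutatorElement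

section

variable {G : Type*} [Group G]

theorem List.prod_map_conj_eq_pow_length {x : G} (hx : x ∈ center G) (l : List G) :
    (l.map fun g => g⁻¹ * x * g).prod = x ^ l.length := by
  have hconj : (fun g => g⁻¹ * x * g) = fun _ => x := funext fun g => by
    rw [mul_assoc, ← mem_center_iff.1 hx g, inv_mul_cancel_left]
  simp [hconj]

theorem commutatorElement_pow_of_mem_center {a b : G} (h : ⁅a, b⁆ ∈ center G) :
    ∀ n : ℕ, ⁅a, b⁆ ^ n = ⁅a ^ n, b⁆
  | 0 => by simp
  | n + 1 => calc
      ⁅a, b⁆ ^ (n + 1) = a * ⁅a, b⁆ ^ n * a⁻¹ * ⁅a, b⁆ := by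
        rw [mem_center_iff.1 (pow_mem h n) a, mul_inv_cancel_right, pow_succ]
      _ = ⁅a ^ (n + 1), b⁆ := by
        rw [commutatorElement_pow_of_mem_center h n]
        simp only [commutatorElement_def, pow_succ']
        group

theorem QuotientGroup.mk_mem_center_quotient_commutator_top {N : Subgroup G} [N.Normal]
    {y : G} (hy : y ∈ N) :
    (y : G ⧸ ⁅N, (⊤ : Subgroup G)⁆) ∈ center (G ⧸ ⁅N, (⊤ : Subgroup G)⁆) := by
  have hstep : y ∈ Subgroup.upperCentralSeriesStep ⁅N, (⊤ : Subgroup G)⁆ :=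
    fun g => commutator_mem_commutator hy (mem_top g)
  rwa [Subgroup.upperCentralSeriesStep_eq_comap_center] at hstep

namespace Subgroup

theorem pow_eq_one_of_mem_closure_of_subset_center {S : Set G} (hS : S ⊆ center G)
    {k : ℕ} (hk : ∀ s ∈ S, s ^ k = 1) {p : G} (hp : p ∈ closure S) : p ^ k = 1 := by
  have hcenter : closure S ≤ center G := (closure_le _).2 hS
  induction hp using closure_induction with
  | mem s hs => exact hk s hs
  | one => exact one_pow k
  | mul a b ha _ iha ihb =>
    rw [Commute.mul_pow (mem_center_iff.1 (hcenter ha) b).symm, iha, ihb, one_mul]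
  | inv a _ iha => rw [inv_pow, iha, inv_one]

theorem pow_mem_commutator_top_of_closure_eq {N : Subgroup G} [N.Normal] {S : Set G}
    (hSN : closure S = N) {k : ℕ} (hS : ∀ s ∈ S, s ^ k ∈ ⁅N, (⊤ : Subgroup G)⁆)
    {y : G} (hy : y ∈ N) :
    y ^ k ∈ ⁅N, (⊤ : Subgroup G)⁆ := by
  rw [← QuotientGroup.eq_one_iff, QuotientGroup.mk_pow]
  refine pow_eq_one_of_mem_closure_of_subset_center
    (S := QuotientGroup.mk' ⁅N, (⊤ : Subgroup G)⁆ '' S) ?_ ?_ ?_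
  · rintro _ ⟨s, hs, rfl⟩
    exact QuotientGroup.mk_mem_center_quotient_commutator_top (hSN ▸ subset_closure hs)
  · rintro _ ⟨s, hs, rfl⟩
    rw [← map_pow, QuotientGroup.mk'_apply, QuotientGroup.eq_one_iff]
    exact hS s hs
  · rw [← MonoidHom.map_closure, hSN]
    exact mem_map_of_mem _ hy

theorem pow_mem_commutator_commutator_top {N : Subgroup G} [N.Normal] {k : ℕ}
    (hN : ∀ y ∈ N, y ^ k ∈ ⁅N, (⊤ : Subgroup G)⁆) {z : G}
    (hz : z ∈ ⁅N, (⊤ : Subgroup G)⁆) :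
    z ^ k ∈ ⁅⁅N, (⊤ : Subgroup G)⁆, (⊤ : Subgroup G)⁆ := by
  refine pow_mem_commutator_top_of_closure_eq (commutator_def N ⊤).symm ?_ hz
  rintro _ ⟨y, hy, g, -, rfl⟩
  have hcenter := QuotientGroup.mk_mem_center_quotient_commutator_top
    (commutator_mem_commutator hy (mem_top g))
  rw [← QuotientGroup.eq_one_iff, QuotientGroup.mk_pow]
  rw [← QuotientGroup.mk'_apply, map_commutatorElement] at hcenter ⊢
  rw [commutatorElement_pow_of_mem_center hcenter, ← map_pow, ← map_commutatorElement,
    QuotientGroup.mk'_apply, QuotientGroup.eq_one_iff]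
  exact commutator_mem_commutator (hN y hy) (mem_top g)

theorem pow_length_mem_commutator_normalClosure_top {x : G} {l : List G}
    (hl : (l.map fun g => g⁻¹ * x * g).prod = 1) {y : G} (hy : y ∈ normalClosure {x}) :
    y ^ l.length ∈ ⁅normalClosure {x}, (⊤ : Subgroup G)⁆ := by
  have hxk : x ^ l.length ∈ ⁅normalClosure {x}, (⊤ : Subgroup G)⁆ := by
    rw [← QuotientGroup.eq_one_iff, QuotientGroup.mk_pow,
      ← List.length_map (QuotientGroup.mk' ⁅normalClosure {x}, (⊤ : Subgroup G)⁆),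
      ← List.prod_map_conj_eq_pow_length
        (QuotientGroup.mk_mem_center_quotient_commutator_top
          (subset_normalClosure (Set.mem_singleton x)))]
    have := congrArg (QuotientGroup.mk' ⁅normalClosure {x}, (⊤ : Subgroup G)⁆) hl
    rw [map_list_prod, map_one, List.map_map] at this
    rw [List.map_map]
    exact this
  refine pow_mem_commutator_top_of_closure_eq (N := normalClosure {x}) rfl (fun s hs => ?_) hy
  obtain ⟨_, rfl, hconj⟩ := Group.mem_conjugatesOfSet_iff.1 hs
  obtain ⟨c, rfl⟩ := isConj_iff.1 hconj
  rw [conj_pow]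
  exact Normal.conj_mem inferInstance _ hxk c

def iterCommutatorTop (N : Subgroup G) : ℕ → Subgroup G
  | 0 => N
  | j + 1 => ⁅N.iterCommutatorTop j, ⊤⁆

instance iterCommutatorTop_normal (N : Subgroup G) [N.Normal] :
    ∀ j, (N.iterCommutatorTop j).Normal
  | 0 => ‹N.Normal›
  | j + 1 => by
    have := iterCommutatorTop_normal N j
    exact commutator_normal _ _

theorem iterCommutatorTop_le_lowerCentralSeries (N : Subgroup G) :
    ∀ j, N.iterCommutatorTop j ≤ (⊤ : Subgroup G).lowerCentralSeries j
  | 0 => le_top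
  | j + 1 => commutator_mono (iterCommutatorTop_le_lowerCentralSeries N j) le_rfl

theorem pow_mem_iterCommutatorTop_succ {N : Subgroup G} [N.Normal] {k : ℕ}
    (hN : ∀ y ∈ N, y ^ k ∈ ⁅N, (⊤ : Subgroup G)⁆) :
    ∀ j, ∀ y ∈ N.iterCommutatorTop j, y ^ k ∈ N.iterCommutatorTop (j + 1)
  | 0 => hN
  | j + 1 => fun _ hy =>
    pow_mem_commutator_commutator_top (pow_mem_iterCommutatorTop_succ hN j) hy

theorem pow_pow_length_mem_lowerCentralSeries {x : G} {l : List G}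
    (hl : (l.map fun g => g⁻¹ * x * g).prod = 1) (m : ℕ) :
    x ^ l.length ^ m ∈ (⊤ : Subgroup G).lowerCentralSeries m := by
  suffices x ^ l.length ^ m ∈ (normalClosure {x}).iterCommutatorTop m from
    iterCommutatorTop_le_lowerCentralSeries _ m this
  induction m with
  | zero =>
    rw [pow_zero, pow_one]
    exact subset_normalClosure (Set.mem_singleton x)
  | succ m ih =>
    rw [pow_succ, pow_mul]
    exact pow_mem_iterCommutatorTop_succ
      (fun _ hy => pow_length_mem_commutator_normalClosure_top hl hy) m _ ih

end Subgroup

theorem IsGenTorsion.exists_list_length_genOrder {x : G} (hx : IsGenTorsion x) :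
    ∃ l : List G, l.length = genOrder x ∧ (l.map fun g => g⁻¹ * x * g).prod = 1 := by
  obtain ⟨l, hl, hprod⟩ := hx
  exact (Nat.sInf_mem (s := {k | 0 < k ∧ ∃ l : List G, l.length = k ∧
    (l.map fun g => g⁻¹ * x * g).prod = 1})
    ⟨l.length, List.length_pos_iff.2 hl, l, rfl, hprod⟩).2

end

theorem stmt16_general {G : Type*} [Group G] (x : G) (k : ℕ) (hx : IsGenTorsion x)
    (hk : genOrder x = k) (m : ℕ) :
    x ^ (k ^ m) ∈ (⊤ : Subgroup G).lowerCentralSeries (m - 1) := by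
  obtain ⟨l, hl, hprod⟩ := hx.exists_list_length_genOrder
  rw [← hk, ← hl]
  exact (⊤ : Subgroup G).lowerCentralSeries_antitone (Nat.sub_le m 1)
    (pow_pow_length_mem_lowerCentralSeries hprod m)

theorem stmt16 {G : Type*} [Group G] (x : G) (k : ℕ) (hx : IsGenTorsion x)
    (hk : genOrder x = k) (m : ℕ) (hm : 0 < m) :
    x ^ (k ^ m) ∈ (⊤ : Subgroup G).lowerCentralSeries (m - 1) :=
  stmt16_general x k hx hk m
end

section
/- If G is a nilpotent group, then every generalized torsion element of G is a torsion element. -/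
/-!
Let `N₀` be the normal closure of `x` and `Nⱼ₊₁ = [Nⱼ, G]`; since `Nⱼ ≤ γⱼ₊₁(G)`, nilpotency gives
`N_c = 1`. Each `Nⱼ / Nⱼ₊₁` is central in `G / Nⱼ₊₁`. If a product of `k` conjugates of `x` is `1`,
then modulo `N₁` every conjugate of `x` equals `x`, so `x ^ k ∈ N₁`, and by centrality `z ^ k ∈ N₁`
for all `z ∈ N₀`. The congruence `[y ^ k, g] ≡ [y, g] ^ k` modulo `Nⱼ₊₂` for `y ∈ Nⱼ` pushes this
down the series: `z ^ k ∈ Nⱼ₊₁` for all `z ∈ Nⱼ`. Hence `x ^ (k ^ c) ∈ N_c = 1`.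
-/

open Subgroup (center mem_center_iff closure commutator_mem_commutator mem_top normalClosure
  subset_normalClosure)
open scoped commutatorElement

section

variable {G : Type*} [Group G]

theorem prod_map_conj_eq_pow_of_mem_center {x : G} (hx : x ∈ center G) {ι : Type*}
    (f : ι → G) (l : List ι) : (l.map fun i => (f i)⁻¹ * x * f i).prod = x ^ l.length := by
  have hconj : ∀ g : G, g⁻¹ * x * g = x := fun g => by
    rw [mul_assoc, ← mem_center_iff.mp hx g, inv_mul_cancel_left]
  simp only [hconj, List.map_const', List.prod_replicate]

theorem commutatorElement_pow_left_of_mem_center {y g : G}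
    (h : ∀ n : ℕ, ⁅y ^ n, g⁆ ∈ center G) (n : ℕ) : ⁅y ^ n, g⁆ = ⁅y, g⁆ ^ n := by
  induction n with
  | zero => simp
  | succ n ih =>
    have hexpand : ⁅y ^ (n + 1), g⁆ = y * ⁅y ^ n, g⁆ * y⁻¹ * ⁅y, g⁆ := by
      simp only [commutatorElement_def]; group
    rw [hexpand, mem_center_iff.mp (h n) y, mul_inv_cancel_right, ih, pow_succ]

section Quotient

variable {N : Subgroup G} [N.Normal]

theorem mk_mem_center_of_commutator_le {H : Subgroup G} (hHN : ⁅H, (⊤ : Subgroup G)⁆ ≤ N)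
    {h : G} (hh : h ∈ H) : (h : G ⧸ N) ∈ center (G ⧸ N) := by
  have : h ∈ Subgroup.upperCentralSeriesStep N := by
    rw [Subgroup.mem_upperCentralSeriesStep]
    exact fun g => hHN (commutator_mem_commutator hh (mem_top g))
  rwa [Subgroup.upperCentralSeriesStep_eq_comap_center] at this

theorem pow_mem_of_mem_closure {s : Set G} (hs : ⁅closure s, (⊤ : Subgroup G)⁆ ≤ N) {n : ℕ}
    (h : ∀ a ∈ s, a ^ n ∈ N) {z : G} (hz : z ∈ closure s) : z ^ n ∈ N := by
  induction hz using Subgroup.closure_induction with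
  | mem a ha => exact h a ha
  | one => simp
  | mul a b ha hb iha ihb =>
    have hab : Commute (a : G ⧸ N) b :=
      (mem_center_iff.mp (mk_mem_center_of_commutator_le hs ha) b).symm
    rw [← QuotientGroup.eq_one_iff] at iha ihb ⊢
    rw [QuotientGroup.mk_pow, QuotientGroup.mk_mul, hab.mul_pow, ← QuotientGroup.mk_pow,
      ← QuotientGroup.mk_pow, iha, ihb, one_mul]
  | inv a _ iha => rw [inv_pow]; exact inv_mem iha

theorem pow_mem_of_mem_commutator_top {A M : Subgroup G} {n : ℕ}
    (hA : ⁅⁅A, (⊤ : Subgroup G)⁆, (⊤ : Subgroup G)⁆ ≤ N) (hM : ⁅M, (⊤ : Subgroup G)⁆ ≤ N)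
    (h : ∀ y ∈ A, y ^ n ∈ M) {z : G} (hz : z ∈ ⁅A, (⊤ : Subgroup G)⁆) : z ^ n ∈ N := by
  refine pow_mem_of_mem_closure hA ?_ hz
  rintro _ ⟨y, hy, g, -, rfl⟩
  have hmk : ∀ a b : G, ((⁅a, b⁆ : G) : G ⧸ N) = ⁅(a : G ⧸ N), (b : G ⧸ N)⁆ :=
    map_commutatorElement (QuotientGroup.mk' N)
  have hcentral : ∀ m : ℕ, ⁅(y : G ⧸ N) ^ m, (g : G ⧸ N)⁆ ∈ center (G ⧸ N) := fun m => by
    rw [← QuotientGroup.mk_pow, ← hmk]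
    exact mk_mem_center_of_commutator_le hA (commutator_mem_commutator (pow_mem hy m) (mem_top g))
  rw [← QuotientGroup.eq_one_iff, QuotientGroup.mk_pow, hmk,
    ← commutatorElement_pow_left_of_mem_center hcentral, ← QuotientGroup.mk_pow, ← hmk,
    QuotientGroup.eq_one_iff]
  exact hM (commutator_mem_commutator (h y hy) (mem_top g))

theorem pow_length_mem_of_mem_normalClosure {x : G} {l : List G}
    (hl : (l.map fun g => g⁻¹ * x * g).prod = 1) (hN : ⁅normalClosure {x}, (⊤ : Subgroup G)⁆ ≤ N)
    {z : G} (hz : z ∈ normalClosure {x}) : z ^ l.length ∈ N := by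
  refine pow_mem_of_mem_closure hN ?_ hz
  have hx : (x : G ⧸ N) ∈ center (G ⧸ N) :=
    mk_mem_center_of_commutator_le hN (subset_normalClosure rfl)
  have hxk : (x : G ⧸ N) ^ l.length = 1 := by
    have := congrArg (QuotientGroup.mk' N) hl
    simp only [map_list_prod, List.map_map, Function.comp_def, map_mul, map_inv, map_one,
      QuotientGroup.mk'_apply] at this
    rwa [prod_map_conj_eq_pow_of_mem_center hx] at this
  intro a ha
  obtain ⟨_, rfl, hxa⟩ := Group.mem_conjugatesOfSet_iff.mp ha
  obtain ⟨c, rfl⟩ := isConj_iff.mp hxa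
  rw [← QuotientGroup.eq_one_iff, QuotientGroup.mk_pow, QuotientGroup.mk_mul, QuotientGroup.mk_mul,
    QuotientGroup.mk_inv, mem_center_iff.mp hx, mul_inv_cancel_right, hxk]

end Quotient

def lowerCentralSeriesFrom (H : Subgroup G) : ℕ → Subgroup G
  | 0 => H
  | s + 1 => ⁅lowerCentralSeriesFrom H s, (⊤ : Subgroup G)⁆

namespace lowerCentralSeriesFrom

variable (H : Subgroup G)

instance normal [H.Normal] : ∀ s, (lowerCentralSeriesFrom H s).Normal
  | 0 => ‹H.Normal›
  | s + 1 => by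
    have := normal s
    exact Subgroup.commutator_normal _ _

theorem le_lowerCentralSeries :
    ∀ s, lowerCentralSeriesFrom H s ≤ (⊤ : Subgroup G).lowerCentralSeries s
  | 0 => le_top
  | s + 1 => Subgroup.commutator_mono (le_lowerCentralSeries s) le_rfl

theorem pow_pow_mem [H.Normal] {n : ℕ} (h : ∀ z ∈ H, z ^ n ∈ ⁅H, (⊤ : Subgroup G)⁆) {z : G}
    (hz : z ∈ H) (j : ℕ) : z ^ n ^ j ∈ lowerCentralSeriesFrom H j := by
  have hstep : ∀ j, ∀ z ∈ lowerCentralSeriesFrom H j, z ^ n ∈ lowerCentralSeriesFrom H (j + 1) := by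
    intro j
    induction j with
    | zero => exact h
    | succ j ih => exact fun z => pow_mem_of_mem_commutator_top le_rfl le_rfl ih
  induction j with
  | zero => simpa [lowerCentralSeriesFrom] using hz
  | succ j ih => simpa only [pow_succ, pow_mul] using hstep j _ ih

end lowerCentralSeriesFrom

theorem isOfFinOrder_of_pow_mem_commutator [Group.IsNilpotent G] {H : Subgroup G} [H.Normal]
    {n : ℕ} (hn : 0 < n) (h : ∀ z ∈ H, z ^ n ∈ ⁅H, (⊤ : Subgroup G)⁆) {z : G} (hz : z ∈ H) :
    IsOfFinOrder z := by
  obtain ⟨c, hc⟩ := Subgroup.nilpotent_iff_lowerCentralSeries.mp ‹Group.IsNilpotent G›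
  have hbot : lowerCentralSeriesFrom H c = ⊥ :=
    le_bot_iff.mp (hc ▸ lowerCentralSeriesFrom.le_lowerCentralSeries H c)
  have hpow := lowerCentralSeriesFrom.pow_pow_mem H h hz c
  rw [hbot, Subgroup.mem_bot] at hpow
  exact isOfFinOrder_iff_pow_eq_one.mpr ⟨n ^ c, pow_pos hn c, hpow⟩

end

theorem stmt17 {G : Type*} [Group G] (h : Group.IsNilpotent G) (x : G)
    (hx : IsGenTorsion x) : IsOfFinOrder x := by
  obtain ⟨l, hl, hrel⟩ := hx
  exact isOfFinOrder_of_pow_mem_commutator (List.length_pos_iff.mpr hl)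
    (fun _ => pow_length_mem_of_mem_normalClosure hrel le_rfl) (subset_normalClosure rfl)
end
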